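/- arXiv:2105.06933 — 5 statements merged into one kernel-verified Lean document; each statement's English description precedes it below -/
import Mathlib

section
/- For a natural transformation η : S ⇒ T between functors S, T : C → Set, the pair γ_η = (id, (⊩^{γ_η}_a)) with y ⊩^{γ_η}_a x iff y = η_a(x) is a simulation CM^t(C;S) ⇀ CM^t(C;T); moreover the assignment η ↦ γ_η is functorial and faithful: γ_{1_S} is the identity simulation, γ_{η∘τ} = γ_η ∘ γ_τ, and γ_η = γ_θ implies η = θ. -/
open CategoryTheory

universe w v u

/-- for a natural transformation `η : S ⇒ T` of `Set`-valued
functors, the data `γ_η = (id, ⊩)` with `y ⊩_a x ↔ y = η_a(x)` is a simulation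
`CM^t(C;S) ⇀ CM^t(C;T)`; moreover `η ↦ γ_η` is functorial (identity to identity
simulation, composite to composite simulation) and faithful. -/
theorem CMt_nat_trans_functorial_faithful {C : Type u} [Category.{v} C]
    (S T U : C ⥤ Type w) (η : S ⟶ T) :
    -- (Siml1) for γ_η
    (∀ (a : C) (x : S.obj a), ∃ y : T.obj a, y = η.app a x) ∧
    -- (Siml2): every S₁(f) ∈ S[a,b] is tracked by some T₁(g) ∈ T[a,b]
    (∀ (a b : C) (f : a ⟶ b), ∃ g : a ⟶ b,
      ∀ (x : S.obj a) (y : T.obj a), y = η.app a x →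
        T.map g y = η.app b (S.map f x)) ∧
    -- γ_{1_S} is the identity simulation: its realizability relation is equality
    (∀ (a : C) (y x : S.obj a), y = (𝟙 S : S ⟶ S).app a x ↔ y = x) ∧
    -- γ_{θ ∘ τ} = γ_θ ∘ γ_τ: the realizability relations agree
    (∀ (τ : S ⟶ T) (θ : T ⟶ U) (a : C) (z : U.obj a) (x : S.obj a),
      z = (τ ≫ θ).app a x ↔ ∃ y : T.obj a, z = θ.app a y ∧ y = τ.app a x) ∧
    -- faithfulness: γ_η = γ_θ implies η = θ
    (∀ θ : S ⟶ T,
      (∀ (a : C) (y : T.obj a) (x : S.obj a), y = η.app a x ↔ y = θ.app a x) →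
      η = θ) := by
  refine ⟨fun a x => ⟨η.app a x, rfl⟩, fun a b f => ⟨f, ?_⟩, fun a y x => Iff.rfl,
    fun τ θ a z x => ?_, fun θ hγ => ?_⟩
  · rintro x _ rfl
    exact (NatTrans.naturality_apply η f x).symm
  · rw [exists_eq_right]
    rfl
  · ext a x
    exact (hγ a (η.app a x) x).mp rfl
end

section
/- The canonical functor F^t : C → Asm(CM^t(C;S)), defined on objects by F^t(a) = (S₀(a), a, =) with the equality realizability relation, and on morphisms by F^t(f) = S₁(f), is a full functor that is injective on objects. -/
open CategoryTheory

universe w v u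

/-- An assembly over the total computability model `CM^t(C;S)`: a set `X`, a
type name (object of `C`) and a total realizability relation. -/
structure TotAsm {C : Type u} [Category.{v} C] (S : C ⥤ Type w) where
  X : Type w
  t : C
  R : S.obj t → X → Prop
  total : ∀ x, ∃ y, R y x

variable {C : Type u} [Category.{v} C] {S : C ⥤ Type w}

/-- Morphisms of assemblies over `CM^t(C;S)`: functions tracked by some element
`S₁(g)` of `S[a,b] = {S₁(g) : g : a ⟶ b}`. -/
instance TotAsm.category : Category (TotAsm S) where
  Hom A B := {f : A.X → B.X // ∃ g : A.t ⟶ B.t, ∀ x y, A.R y x → B.R (S.map g y) (f x)}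
  id A := ⟨id, ⟨𝟙 A.t, fun x y h => by simpa using h⟩⟩
  comp {A B D} f g := ⟨g.1 ∘ f.1, by
    obtain ⟨gf, hf⟩ := f.2
    obtain ⟨gg, hg⟩ := g.2
    exact ⟨gf ≫ gg, fun x y h => by
      simpa [FunctorToTypes.map_comp_apply] using hg _ _ (hf x y h)⟩⟩

/-- The canonical functor `F^t : C ⥤ Asm(CM^t(C;S))`, sending `a` to the
assembly `(S₀(a), a, =)` with equality realizability, and `f` to `S₁(f)`. -/
def Ft (S : C ⥤ Type w) : C ⥤ TotAsm S where
  obj a := ⟨S.obj a, a, Eq, fun x => ⟨x, rfl⟩⟩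
  map {a b} f := ⟨S.map f, ⟨f, fun x y h => by subst h; rfl⟩⟩
  map_id a := Subtype.ext (by funext x; simp; rfl)
  map_comp f g := Subtype.ext (by funext x; simp; rfl)

/-- the canonical functor `F^t` is full and injective on objects. -/
theorem Ft_full_and_injective_on_objects :
    (Ft S).Full ∧ Function.Injective (Ft S).obj := by
  constructor
  · constructor
    intro a b f
    obtain ⟨g, hg⟩ := f.2
    refine ⟨g, Subtype.ext ?_⟩
    funext x
    exact hg x x rfl
  · intro a b h
    exact congrArg TotAsm.t h
end

section
/- If the functor S : C → Set is injective on arrows, then the canonical functor F^t : C → Asm(CM^t(C;S)) is an embedding: full, faithful, and injective on objects. -/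
open CategoryTheory

universe w v u

variable {C : Type u} [Category.{v} C] {S : C ⥤ Type w}

/-! A morphism `F^t a ⟶ F^t b` is a function `φ : S a → S b` tracked by some `S g`; as realizability
in `F^t a` and `F^t b` is equality, being tracked by `S g` means `φ = S g`. So `F^t` is full for every
`S`, faithful exactly when `S` is, and injective on objects because `a` is the type name of `F^t a`. -/

instance Ft_full : (Ft S).Full where
  map_surjective {_ _} φ := by
    obtain ⟨φ, g, hg⟩ := φ
    exact ⟨g, Subtype.ext (funext fun x => hg x x rfl)⟩

theorem Ft_faithful (hS : ∀ {a b : C} (f g : a ⟶ b), S.map f = S.map g → f = g) :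
    (Ft S).Faithful where
  map_injective {_ _} f g h :=
    hS f g (by ext x; exact congrFun (congrArg Subtype.val h) x)

theorem Ft_obj_injective : Function.Injective (Ft S).obj := fun _ _ h => congrArg TotAsm.t h

/-- if `S` is injective on arrows, then the canonical functor
`F^t : C ⥤ Asm(CM^t(C;S))` is an embedding: full, faithful and injective on
objects. -/
theorem Ft_embedding
    (hS : ∀ {a b : C} (f g : a ⟶ b), S.map f = S.map g → f = g) :
    (Ft S).Full ∧ (Ft S).Faithful ∧ Function.Injective (Ft S).obj :=
  ⟨inferInstance, Ft_faithful hS, Ft_obj_injective⟩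
end

section
/- For a total and small computability model C, the data γ^t sending τ to the assembly (C(τ), τ, =) with realizability relation the equality on C(τ), defines a simulation from C into CM^t(Asm(C); Frg^C), and moreover δ^t ∘ γ^t equals the identity simulation ι_C. -/
/-!
A computability model over a class (type) of type names `ι` assigns to each type
name a datatype and to each pair of type names a class of partial functions,
containing identities and closed under composition.
-/

universe u

structure CompModel : Type (u + 1) where
  ι : Type u
  C : ι → Type u
  F : ∀ σ τ : ι, Set (C σ →. C τ)
  id_mem : ∀ τ, PFun.id (C τ) ∈ F τ τ
  comp_mem : ∀ {ρ σ τ : ι}, ∀ f ∈ F ρ σ, ∀ g ∈ F σ τ, g.comp f ∈ F ρ τ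

/-- `f'` tracks `f` through realizability relations `Rσ`, `Rτ`. -/
def Tracks {α β α' β' : Type u} (Rσ : α' → α → Prop) (Rτ : β' → β → Prop)
    (f : α →. β) (f' : α' →. β') : Prop :=
  ∀ x y, y ∈ f x → ∀ x', Rσ x' x → ∃ y', y' ∈ f' x' ∧ Rτ y' y

/-- A simulation of `M` in `N`. -/
structure Simulation (M N : CompModel.{u}) where
  map : M.ι → N.ι
  R : ∀ τ : M.ι, N.C (map τ) → M.C τ → Prop
  total : ∀ τ x, ∃ y, R τ y x
  track : ∀ σ τ : M.ι, ∀ f ∈ M.F σ τ,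
    ∃ f' ∈ N.F (map σ) (map τ), Tracks (R σ) (R τ) f f'

/-- An assembly over a computability model `M`. -/
structure Assembly (M : CompModel.{u}) : Type (u + 1) where
  X : Type u
  t : M.ι
  R : M.C t → X → Prop
  total : ∀ x, ∃ y, R y x

/-- A function between (the underlying sets of) assemblies is tracked, i.e. it
belongs to `Frg^M[A,B]`, the hom-class of the total computability model
`CM^t(Asm(M); Frg^M)`. -/
def AsmTracked (M : CompModel.{u}) (A B : Assembly M) (f : A.X → B.X) : Prop :=
  ∃ g ∈ M.F A.t B.t, ∀ (x : A.X) (y : M.C A.t), A.R y x → ∃ z, z ∈ g y ∧ B.R z (f x)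

/-- The assembly `(C(τ), τ, =)` over `M`. -/
def eqAsm (M : CompModel.{u}) (τ : M.ι) : Assembly M :=
  ⟨M.C τ, τ, Eq, fun x => ⟨x, rfl⟩⟩

/-- for a total and small computability model `M`, the data `γ^t`
sending `τ` to the assembly `(C(τ), τ, =)`, with equality realizability, is a
simulation `M ⇀ CM^t(Asm(M); Frg^M)`; moreover `δ^t ∘ γ^t = ι_M`: the composite
type-name function is the identity and the composite realizability relation is
equality. -/
theorem gamma_t_is_simulation_and_section (M : CompModel.{u})
    (htotal : ∀ σ τ : M.ι, ∀ f ∈ M.F σ τ, ∀ x : M.C σ, (f x).Dom) :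
    -- (Siml1) for γ^t: realizability is equality on C(τ)
    (∀ (τ : M.ι) (x : M.C τ), ∃ y : (eqAsm M τ).X, y = x) ∧
    -- (Siml2) for γ^t: each f ∈ M.F σ τ is tracked by some f' ∈ Frg^M[eqAsm σ, eqAsm τ]
    (∀ σ τ : M.ι, ∀ f ∈ M.F σ τ,
      ∃ f' : (eqAsm M σ).X → (eqAsm M τ).X, AsmTracked M (eqAsm M σ) (eqAsm M τ) f' ∧
        Tracks (α := M.C σ) (α' := (eqAsm M σ).X) (fun y x => y = x) (fun y x => y = x) f (PFun.lift f')) ∧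
    -- δ^t ∘ γ^t = ι_M on type names
    ((fun τ : M.ι => (eqAsm M τ).t) = id) ∧
    -- δ^t ∘ γ^t = ι_M on realizability relations
    (∀ (τ : M.ι) (z x : M.C τ),
      (∃ y : (eqAsm M τ).X, (eqAsm M τ).R z y ∧ y = x) ↔ z = x) := by
  refine ⟨fun τ x => ⟨x, rfl⟩, ?_, rfl, ?_⟩
  · intro σ τ f hf
    refine ⟨fun x => (f x).get (htotal σ τ f hf x), ⟨f, hf, ?_⟩, ?_⟩
    · rintro x y rfl
      exact ⟨(f y).get (htotal σ τ f hf y), (f y).get_mem _, rfl⟩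
    · intro x y hy x' hx
      subst hx
      exact ⟨(f x').get (htotal σ τ f hf x'), ⟨trivial, rfl⟩,
        (Part.get_eq_iff_mem _).mpr hy⟩
  · rintro τ z x
    constructor
    · rintro ⟨y, h1, h2⟩; exact h1.trans h2
    · intro h; exact ⟨z, rfl, h⟩
end

section
/- If C is a category with pullbacks and S : C → Set preserves pullbacks, then CM^p(C;S), with datatypes S₀(a) and partial-function classes S[a,b] = {S₁(i,f) : i ∈ C(↪ a), f : dom(i) → b}, is a computability model: it contains all identities and is closed under composition of partial functions. -/
/-!
A partial morphism `(i, f)` is sent to the partial function with graph `{(S₁ i u, S₁ f u)}`,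
single-valued because `S` preserves monos. Identities come from `(𝟙, 𝟙)`. For the composite of
`(i, f)` and `(j, g)`, the pairs `u ∈ S₀ s`, `t' ∈ S₀ t` with `S₁ f u = S₁ j t'` are exactly the
elements of `S₀ P` for the pullback `P` of `f` and `j`, since `S` preserves it; so the composite
is induced by the partial morphism `(fst ≫ i, snd ≫ g)`, and `fst ≫ i` is again mono.
-/

open CategoryTheory Limits

universe w v u

/-- The partial function `S₁(i, f) : S₀(a) ⇀ S₀(b)` determined by a partial
morphism `(i, f) : a ⇀ b`: its domain is the image of `S₁(i)`, with value
`S₁(f)(x)` at `S₁(i)(x)`. -/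
noncomputable def SPart {C : Type u} [Category.{v} C] (S : C ⥤ Type w) {s a b : C}
    (i : s ⟶ a) (f : s ⟶ b) : S.obj a →. S.obj b :=
  fun x => ⟨∃ y, S.map i y = x, fun h => S.map f h.choose⟩

/-- The class `S[a,b] = {S₁(i,f) : i : s ↪ a mono, f : s ⟶ b}` of partial
functions of the computability model `CM^p(C;S)`. -/
def SPartClass {C : Type u} [Category.{v} C] (S : C ⥤ Type w) (a b : C) :
    Set (S.obj a →. S.obj b) :=
  {p | ∃ (s : C) (i : s ⟶ a) (f : s ⟶ b), Mono i ∧ p = SPart S i f}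

section

variable {C : Type u} [Category.{v} C] (S : C ⥤ Type w)

lemma CategoryTheory.Functor.injective_map_of_mono [S.PreservesMonomorphisms] {s a : C}
    (i : s ⟶ a) [Mono i] :
    Function.Injective (S.map i) :=
  (mono_iff_injective _).1 (S.map_mono i)

lemma exists_map_pullback_fst_eq_and_snd_eq {s t b : C} (f : s ⟶ b) (j : t ⟶ b)
    [HasPullback f j] [PreservesLimit (cospan f j) S] {x : S.obj s} {y : S.obj t}
    (h : S.map f x = S.map j y) :
    ∃ w, S.map (pullback.fst f j) w = x ∧ S.map (pullback.snd f j) w = y := by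
  let hP := isLimitOfHasPullbackOfPreservesLimit S f j
  exact ⟨(PullbackCone.IsLimit.equivPullbackObj hP).symm ⟨(x, y), h⟩,
    PullbackCone.IsLimit.equivPullbackObj_symm_apply_fst hP _,
    PullbackCone.IsLimit.equivPullbackObj_symm_apply_snd hP _⟩

lemma mem_SPart_iff {s a b : C} {i : s ⟶ a} (f : s ⟶ b) (hi : Function.Injective (S.map i))
    {x : S.obj a} {v : S.obj b} :
    v ∈ SPart S i f x ↔ ∃ u, S.map i u = x ∧ S.map f u = v := by
  constructor
  · rintro ⟨h, rfl⟩
    exact ⟨h.choose, h.choose_spec, rfl⟩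
  · rintro ⟨u, hu, rfl⟩
    have h : ∃ y, S.map i y = x := ⟨u, hu⟩
    exact ⟨h, congrArg (S.map f) (hi (h.choose_spec.trans hu.symm))⟩

lemma SPart_id (a : C) : SPart S (𝟙 a) (𝟙 a) = PFun.id (S.obj a) := by
  funext x
  refine Part.ext fun v => ?_
  rw [mem_SPart_iff S _ (fun _ _ h => by simpa using h)]
  simp [eq_comm]

lemma SPart_comp_SPart [S.PreservesMonomorphisms] {s t a b c : C} (i : s ⟶ a) (f : s ⟶ b)
    (j : t ⟶ b) (g : t ⟶ c) [Mono i] [Mono j] [HasPullback f j]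
    [PreservesLimit (cospan f j) S] :
    (SPart S j g).comp (SPart S i f) = SPart S (pullback.fst f j ≫ i) (pullback.snd f j ≫ g) := by
  funext x
  refine Part.ext fun v => ?_
  simp only [PFun.comp_apply, Part.mem_bind_iff (g := SPart S j g),
    mem_SPart_iff S _ (S.injective_map_of_mono _), Functor.map_comp_apply]
  constructor
  · rintro ⟨_, ⟨u, rfl, rfl⟩, t', hft', rfl⟩
    obtain ⟨w, rfl, rfl⟩ := exists_map_pullback_fst_eq_and_snd_eq S f j hft'.symm
    exact ⟨w, rfl, rfl⟩
  · rintro ⟨w, rfl, rfl⟩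
    refine ⟨_, ⟨_, rfl, rfl⟩, _, ?_, rfl⟩
    rw [← Functor.map_comp_apply, ← Functor.map_comp_apply, pullback.condition]

end

/-- if `C` has pullbacks and `S : C ⥤ Set` preserves pullbacks,
then `CM^p(C;S)`, with datatypes `S₀(a)` and partial-function classes
`S[a,b] = {S₁(i,f)}`, is a computability model: it contains all identity
partial functions and is closed under composition of partial functions. -/
theorem CMp_is_computability_model {C : Type u} [Category.{v} C] [HasPullbacks C]
    (S : C ⥤ Type w) [PreservesLimitsOfShape WalkingCospan S] :
    (∀ a : C, PFun.id (S.obj a) ∈ SPartClass S a a) ∧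
    (∀ a b c : C, ∀ p ∈ SPartClass S a b, ∀ q ∈ SPartClass S b c,
      q.comp p ∈ SPartClass S a c) := by
  refine ⟨fun a => ⟨a, 𝟙 a, 𝟙 a, inferInstance, (SPart_id S a).symm⟩, ?_⟩
  rintro a b c _ ⟨s, i, f, hi, rfl⟩ _ ⟨t, j, g, hj, rfl⟩
  exact ⟨pullback f j, pullback.fst f j ≫ i, pullback.snd f j ≫ g, inferInstance,
    SPart_comp_SPart S i f j g⟩
end
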